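/- arXiv:2501.18387 — 5 statements merged into one kernel-verified Lean document; each statement's English description precedes it below -/
import Mathlib

section
/- Half-gates (HG2) AND-gate correctness: Let G be a group of exponent 2, Δ, Wa0, Wb0 ∈ G, and H : G → G an arbitrary function. Define Wi0 = H(Wa0), F = H(Wa0) ⊕ H(Wa0 ⊕ Δ) ⊕ Wb0, and the evaluation function Ev(Wa, Wb, wa) = H(Wa) if wa = 0 and H(Wa) ⊕ Wb ⊕ F if wa = 1. Then for all wa, wb ∈ {0,1}, Ev(Wa0 ⊕ wa·Δ, Wb0 ⊕ wb·Δ, wa) = Wi0 ⊕ (wa ∧ wb)·Δ. -/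
/-! The garbler's ciphertext `F` is built so that, on the evaluator's `wa = 1` branch, the terms
`H (Wa0 + Δ)` and `Wb0` each occur twice and cancel in characteristic two, leaving `H Wa0` plus
exactly the `wb · Δ` offset carried by the second input key. -/

theorem add_add_add_cancel_of_add_self {G : Type*} [AddCommGroup G] (h2 : ∀ x : G, x + x = 0)
    (a b c d : G) : b + (c + d) + (a + b + c) = a + d :=
  calc b + (c + d) + (a + b + c) = a + d + (b + b) + (c + c) := by abel
    _ = a + d := by rw [h2, h2, add_zero, add_zero]

/-- Half-gates (HG2) AND-gate correctness: honest evaluation of the single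
ciphertext `F` yields the output key for the AND of the input truth values. -/
theorem HG2_correct {G : Type*} [AddCommGroup G]
    (h2 : ∀ x : G, x + x = 0) (Δ Wa0 Wb0 : G) (H : G → G) :
    let Wi0 := H Wa0
    let F := H Wa0 + H (Wa0 + Δ) + Wb0
    let Ev : G → G → Bool → G := fun Wa Wb wa =>
      if wa then H Wa + Wb + F else H Wa
    ∀ wa wb : Bool,
      Ev (Wa0 + (if wa then Δ else 0)) (Wb0 + (if wb then Δ else 0)) wa =
        Wi0 + (if wa && wb then Δ else 0) := by
  intro Wi0 F Ev wa wb
  cases wa with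
  | false => simp [Ev, Wi0]
  | true =>
    simpa [Ev, F, Wi0] using
      add_add_add_cancel_of_add_self h2 (H Wa0) (H (Wa0 + Δ)) Wb0 (if wb then Δ else 0)
end

section
/- Bandwidth-free half-gate (HG1/HG0) correctness: Let G be a group of exponent 2, Δ, Wa0 ∈ G, H : G → G arbitrary. Define Wi0 = H(Wa0) and Wb0 = H(Wa0) ⊕ H(Wa0 ⊕ Δ), and the evaluation function Ev(Wa, Wb, wa) = H(Wa) if wa = 0 and H(Wa) ⊕ Wb if wa = 1. Then for all wa, wb ∈ {0,1}, Ev(Wa0 ⊕ wa·Δ, Wb0 ⊕ wb·Δ, wa) = Wi0 ⊕ (wa ∧ wb)·Δ; i.e., the AND gate is evaluated correctly with zero ciphertexts. -/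
theorem add_add_add_eq_of_add_self_eq_zero {G : Type*} [AddCommMonoid G] {x : G}
    (hx : x + x = 0) (y z : G) : x + (y + x + z) = y + z :=
  calc x + (y + x + z) = (x + x) + (y + z) := by abel
    _ = y + z := by rw [hx, zero_add]

/-- Bandwidth-free half-gate (HG1/HG0) correctness: with
`Wb0 = H(Wa0) + H(Wa0 + Δ)` chosen by the garbler, the AND gate is evaluated
correctly with zero ciphertexts. -/
theorem HG01_correct {G : Type*} [AddCommGroup G]
    (h2 : ∀ x : G, x + x = 0) (Δ Wa0 : G) (H : G → G) :
    let Wi0 := H Wa0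
    let Wb0 := H Wa0 + H (Wa0 + Δ)
    let Ev : G → G → Bool → G := fun Wa Wb wa =>
      if wa then H Wa + Wb else H Wa
    ∀ wa wb : Bool,
      Ev (Wa0 + (if wa then Δ else 0)) (Wb0 + (if wb then Δ else 0)) wa =
        Wi0 + (if wa && wb then Δ else 0) := by
  intro Wi0 Wb0 Ev wa wb
  cases wa
  · simp [Ev, Wi0]
  · -- the term `H (Wa0 + Δ)` that the garbler folded into `Wb0` cancels the evaluator's hash
    simpa [Ev, Wi0, Wb0] using add_add_add_eq_of_add_self_eq_zero (h2 (H (Wa0 + Δ))) (H Wa0)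
      (if wb then Δ else 0)
end

section
/- Information-theoretic AND-gate (ITAND) correctness: Let G be a group of exponent 2, let Wi0, Wi1, Wa1 ∈ G, and define Wa0 = Wi0, Wb0 = Wi0, Wb1 = Wa1 ⊕ Wi1. Define Ev(Wa, Wb, wa, wb) = Wa if wa = 0, else Wb if wb = 0, else Wa ⊕ Wb. Then for all wa, wb ∈ {0,1}, Ev(W_a^{wa}, W_b^{wb}, wa, wb) = W_i^{wa ∧ wb}, where W_x^b denotes the key of wire x for truth value b. -/
theorem add_add_cancel_left_of_add_self_eq_zero {G : Type*} [AddMonoid G]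
    (h2 : ∀ x : G, x + x = 0) (a b : G) : a + (a + b) = b := by
  rw [← add_assoc, h2, zero_add]

/-- Information-theoretic AND-gate (ITAND) correctness. -/
theorem ITAND_correct {G : Type*} [AddCommGroup G]
    (h2 : ∀ x : G, x + x = 0) (Wi0 Wi1 Wa1 : G) :
    let Wa0 := Wi0
    let Wb0 := Wi0
    let Wb1 := Wa1 + Wi1
    let Ev : G → G → Bool → Bool → G := fun Wa Wb wa wb =>
      if wa = false then Wa else if wb = false then Wb else Wa + Wb
    ∀ wa wb : Bool,
      Ev (if wa then Wa1 else Wa0) (if wb then Wb1 else Wb0) wa wb =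
        (if wa && wb then Wi1 else Wi0) := by
  intro Wa0 Wb0 Wb1 Ev wa wb
  cases wa <;> cases wb
  case true.true => exact add_add_cancel_left_of_add_self_eq_zero h2 Wa1 Wi1
  all_goals rfl
end

section
/- Two-value evaluation closure under gate composition: Let G be a group of exponent 2 with a fixed offset Δ, and suppose every wire w of a circuit has exactly two possible keys K_w and K_w ⊕ Δ_w for some wire-specific offset Δ_w. If a gate's verification establishes that its two input wires share a common offset Δ_a = Δ_b = Δ and that its (deterministic) evaluation function maps the four input-key pairs to at most two output values K_i and K_i ⊕ Δ_i, then by induction over the gates in topological order, every circuit-output wire of a circuit passing verification admits at most two distinct evaluation results. -/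
theorem mem_pair_add_ite {G : Type*} [AddCommGroup G] (K Δ : G) (b : Bool) :
    K + (if b then Δ else 0) ∈ ({K, K + Δ} : Set G) := by
  cases b <;> simp

theorem two_value_closure_general {G : Type*} [AddCommGroup G]
    {ι : Type*}
    (key : ℕ → (ι → Bool) → G) (truth : ℕ → (ι → Bool) → Bool)
    (isInput : ℕ → Prop) (inA inB : ℕ → ℕ)
    (ev : ℕ → G → G → Bool → Bool → G)
    (htopoA : ∀ w, ¬ isInput w → inA w < w)
    (htopoB : ∀ w, ¬ isInput w → inB w < w)
    (hinput : ∀ w, isInput w → ∃ K Δw : G, ∀ x : ι → Bool,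
      key w x = K + (if truth w x then Δw else 0))
    (hgate : ∀ w, ¬ isInput w → ∀ x : ι → Bool,
      key w x = ev w (key (inA w) x) (key (inB w) x)
        (truth (inA w) x) (truth (inB w) x))
    (hverified : ∀ w, ¬ isInput w → ∀ Ka Δa Kb Δb : G,
      (∀ x : ι → Bool, key (inA w) x ∈ ({Ka, Ka + Δa} : Set G)) →
      (∀ x : ι → Bool, key (inB w) x ∈ ({Kb, Kb + Δb} : Set G)) →
      ∃ Ki Δi : G, ∀ (Wa Wb : G) (wa wb : Bool),
        Wa ∈ ({Ka, Ka + Δa} : Set G) → Wb ∈ ({Kb, Kb + Δb} : Set G) →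
        ev w Wa Wb wa wb ∈ ({Ki, Ki + Δi} : Set G)) :
    ∀ w, ∃ K Δw : G, ∀ x : ι → Bool,
      key w x ∈ ({K, K + Δw} : Set G) := by
  intro w
  induction w using Nat.strong_induction_on with
  | _ w ih =>
    by_cases hw : isInput w
    · obtain ⟨K, Δw, hK⟩ := hinput w hw
      exact ⟨K, Δw, fun x => hK x ▸ mem_pair_add_ite K Δw (truth w x)⟩
    · obtain ⟨Ka, Δa, ha⟩ := ih (inA w) (htopoA w hw)
      obtain ⟨Kb, Δb, hb⟩ := ih (inB w) (htopoB w hw)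
      obtain ⟨Ki, Δi, hi⟩ := hverified w hw Ka Δa Kb Δb ha hb
      exact ⟨Ki, Δi, fun x => hgate w hw x ▸ hi _ _ _ _ (ha x) (hb x)⟩

/-- Two-value evaluation closure under gate composition: wires are indexed by
`ℕ` in topological order; `key w x` is the key on wire `w` under circuit input
assignment `x`, and `truth w x` its truth value.  Input wires carry exactly two
possible keys (one per truth value, differing by a wire offset).  Each gate
output wire `w` is computed by its evaluation function `ev w` from its two
input wires `inA w, inB w` (both earlier in topological order), and the gate is
"verified": for any two-valued key sets on its inputs, its evaluation lands in
a two-element set `{K, K + Δ}`.  Then every wire admits at most two distinct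
evaluation results over all boolean inputs. -/
theorem two_value_closure {G : Type*} [AddCommGroup G]
    (h2 : ∀ x : G, x + x = 0) {ι : Type*}
    (key : ℕ → (ι → Bool) → G) (truth : ℕ → (ι → Bool) → Bool)
    (isInput : ℕ → Prop) (inA inB : ℕ → ℕ)
    (ev : ℕ → G → G → Bool → Bool → G)
    (htopoA : ∀ w, ¬ isInput w → inA w < w)
    (htopoB : ∀ w, ¬ isInput w → inB w < w)
    (hinput : ∀ w, isInput w → ∃ K Δw : G, ∀ x : ι → Bool,
      key w x = K + (if truth w x then Δw else 0))
    (hgate : ∀ w, ¬ isInput w → ∀ x : ι → Bool,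
      key w x = ev w (key (inA w) x) (key (inB w) x)
        (truth (inA w) x) (truth (inB w) x))
    (hverified : ∀ w, ¬ isInput w → ∀ Ka Δa Kb Δb : G,
      (∀ x : ι → Bool, key (inA w) x ∈ ({Ka, Ka + Δa} : Set G)) →
      (∀ x : ι → Bool, key (inB w) x ∈ ({Kb, Kb + Δb} : Set G)) →
      ∃ Ki Δi : G, ∀ (Wa Wb : G) (wa wb : Bool),
        Wa ∈ ({Ka, Ka + Δa} : Set G) → Wb ∈ ({Kb, Kb + Δb} : Set G) →
        ev w Wa Wb wa wb ∈ ({Ki, Ki + Δi} : Set G)) :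
    ∀ w, ∃ K Δw : G, ∀ x : ι → Bool,
      key w x ∈ ({K, K + Δw} : Set G) :=
  two_value_closure_general key truth isInput inA inB ev htopoA htopoB hinput hgate hverified
end

section
/- Correctness of backward IT garbling for boolean formulas: Let T be a binary tree (boolean formula) over gates AND, XOR, NOT with leaves as input wires, garbled recursively from the root using ITAND, ITXOR, and key-swap for NOT (each node assigns keys W^0, W^1 to its children from its own keys as specified). Then for every assignment x of boolean values to the leaves, evaluating the tree bottom-up with the per-gate evaluation rules (EvITAND, EvXOR, EvNOT) on the input keys {W_leaf^{x_leaf}} yields exactly the root key W_root^{T(x)}, where T(x) is the boolean value computed by the formula. -/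
/-- A boolean formula (fan-out-1 circuit) over AND, XOR, NOT gates, where each
binary gate node is annotated with the freely chosen key `wa1` used by the
backward information-theoretic garbling. -/
inductive GFormula (G : Type*) (ι : Type*) where
  | leaf (i : ι) : GFormula G ι
  | and (wa1 : G) (l r : GFormula G ι) : GFormula G ι
  | xor (wa1 : G) (l r : GFormula G ι) : GFormula G ι
  | not (t : GFormula G ι) : GFormula G ι

/-- Plaintext evaluation of the formula. -/
def GFormula.eval {G ι : Type*} : GFormula G ι → (ι → Bool) → Bool
  | .leaf i, x => x i
  | .and _ l r, x => l.eval x && r.eval x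
  | .xor _ l r, x => Bool.xor (l.eval x) (r.eval x)
  | .not t, x => ! t.eval x

/-- The key obtained by honest evaluation of the subtree garbled backward with
output keys `(W0, W1)`, on input assignment `x`.  Leaves yield the key for
their truth value; AND nodes use ITAND garbling (`Wa0 = Wb0 = W0`,
`Wa1 = wa1`, `Wb1 = wa1 + W1`) and EvITAND; XOR nodes use ITXOR garbling
(`Wb1 = wa1 + W0`, `Wa0 = Wb1 + W1`, `Wb0 = wa1 + W1`) and EvXOR; NOT nodes
swap the keys and copy. -/
def GFormula.evKey {G : Type*} [AddCommGroup G] {ι : Type*} :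
    GFormula G ι → G → G → (ι → Bool) → G
  | .leaf i, W0, W1, x => if x i then W1 else W0
  | .and wa1 l r, W0, W1, x =>
      let Wa := l.evKey W0 wa1 x
      let Wb := r.evKey W0 (wa1 + W1) x
      if l.eval x = false then Wa
      else if r.eval x = false then Wb
      else Wa + Wb
  | .xor wa1 l r, W0, W1, x =>
      l.evKey (wa1 + W0 + W1) wa1 x + r.evKey (wa1 + W1) (wa1 + W0) x
  | .not t, W0, W1, x => t.evKey W1 W0 x

/-! Induction on the formula, one gate at a time. Given the correct keys of its children, each
gate's evaluation rule returns the correct key: the freely chosen key `wa1` always enters the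
result an even number of times, so it cancels in a group of exponent 2. -/

namespace GFormula

theorem keySwap_correct {α : Type*} (W0 W1 : α) (b : Bool) :
    (if b then W0 else W1) = if !b then W1 else W0 := by
  cases b <;> rfl

variable {G : Type*} [AddCommGroup G]

def evITAnd (Wa Wb : G) (wa wb : Bool) : G :=
  if wa = false then Wa else if wb = false then Wb else Wa + Wb

theorem itAnd_correct (h2 : ∀ g : G, g + g = 0) (wa1 W0 W1 : G) (a b : Bool) :
    evITAnd (if a then wa1 else W0) (if b then wa1 + W1 else W0) a b =
      if a && b then W1 else W0 := by
  cases a <;> cases b <;> simp [evITAnd, ← add_assoc, h2]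

theorem itXor_correct (h2 : ∀ g : G, g + g = 0) (wa1 W0 W1 : G) (a b : Bool) :
    (if a then wa1 else wa1 + W0 + W1) + (if b then wa1 + W0 else wa1 + W1) =
      if Bool.xor a b then W1 else W0 := by
  cases a <;> cases b <;> simp only [Bool.false_eq_true, Bool.xor, if_true, if_false] <;>
    abel_nf <;> simp [two_zsmul, h2]

end GFormula

/-- Correctness of backward IT garbling for boolean formulas: honest
evaluation yields exactly the root key associated with the formula's output
truth value. -/
theorem GFormula.evKey_correct {G : Type*} [AddCommGroup G]
    (h2 : ∀ g : G, g + g = 0) {ι : Type*}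
    (t : GFormula G ι) (W0 W1 : G) (x : ι → Bool) :
    t.evKey W0 W1 x = if t.eval x then W1 else W0 := by
  induction t generalizing W0 W1 with
  | leaf i => rfl
  | and wa1 l r ihl ihr =>
    simp only [evKey, eval, ihl, ihr]
    exact itAnd_correct h2 wa1 W0 W1 _ _
  | xor wa1 l r ihl ihr =>
    simp only [evKey, eval, ihl, ihr]
    exact itXor_correct h2 wa1 W0 W1 _ _
  | not t ih =>
    simp only [evKey, eval, ih]
    exact keySwap_correct W0 W1 _
end
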